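/- Let (S,+,□,∂) be a monotonic arithmetical semiring satisfying S(n) ∼ S⁺(n) (axiom G₁⁺, i.e. S(n) − S⁺(n) = o(S⁺(n))), with S⁺(n) > 0 for large n. Then S⁺(n) ∼ S□(n), i.e. S⁺(n) − S□(n) = o(S⁺(n)). -/

import Mathlib

open Asymptotics Filter

/-- Number of elements of degree `n`. -/
noncomputable def cntAll {S : Type*} (deg : S → ℕ) (n : ℕ) : ℕ :=
  Nat.card {x : S // deg x = n}

/-- Number of elements of degree `n` lying in the set `P`. -/
noncomputable def cntIn {S : Type*} (deg : S → ℕ) (P : Set S) (n : ℕ) : ℕ :=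
  Nat.card {x : S // deg x = n ∧ x ∈ P}

/-!
A sum `p + p'` of two additive primes is never an additive prime, and by unique additive
factorization it determines the unordered pair `{p, p'}`. Hence `S⁺(a) S⁺(b)` is at most the
number of non-primes of degree `a + b`, which by `G₁⁺` is `o(S⁺(a + b))`. So
`2 S⁺(a) S⁺(b) ≤ S⁺(a + b)` for large distinct `a, b`, which makes `S⁺` grow at least linearly
and gives `(n/2 + 3) S⁺(n/2 + 2) ≤ S⁺(n)`.

An additive prime `x` of degree `n ≥ 2` that is not a multiplicative prime factors as `x = q y`
with `q` a multiplicative prime and `y` an additive prime, both of degree at least `2`. The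
non-prime `q + y` determines `x`, and its degree is at most `n/2 + 2`. Thus `S⁺(n) − S□(n)` is
at most the number of non-primes of degree `< n/2 + 3`, which is
`o(∑_{m < n/2 + 3} S⁺(m)) = o(S⁺(n))`.
-/

open Finset Finsupp

section Algebra

theorem linearIndependent_of_existsUnique {M : Type*} [AddCommMonoid M] {s : Set M}
    (h : ∀ x : M, ∃! f : s →₀ ℕ, x = f.sum fun p n => n • (p : M)) :
    LinearIndependent ℕ ((↑) : s → M) :=
  fun _ _ hfg => (h _).unique rfl hfg

variable {ι M : Type*} [AddCommMonoid M] {v : ι → M}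

theorem LinearIndependent.add_ne (hv : LinearIndependent ℕ v) (i j k : ι) : v i + v j ≠ v k := by
  intro h
  have := @hv (single i 1 + single j 1) (single k 1) (by simpa using h)
  simpa using congrArg Finsupp.degree this

theorem LinearIndependent.add_eq_add_iff (hv : LinearIndependent ℕ v) {i j k l : ι} :
    v i + v j = v k + v l ↔ (i = k ∧ j = l) ∨ (i = l ∧ j = k) := by
  refine ⟨fun h => ?_, by rintro (⟨rfl, rfl⟩ | ⟨rfl, rfl⟩) <;> simp [add_comm]⟩
  have := @hv (single i 1 + single j 1) (single k 1 + single l 1) (by simpa using h)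
  simpa [single_add_single_eq_single_add_single] using this

end Algebra

section Multiplicative

variable {M : Type*} [CommMonoid M] {s : Set M}

theorem one_notMem_of_existsUnique
    (h : ∃! f : s →₀ ℕ, (1 : M) = f.prod fun q n => (q : M) ^ n) : (1 : M) ∉ s := fun h1 =>
  single_ne_zero.2 one_ne_zero (h.unique (by simp) (by simp) : single (⟨1, h1⟩ : s) 1 = 0)

theorem exists_mul_of_eq_finsuppProd {f : s →₀ ℕ} {x : M}
    (hx : x = f.prod fun q n => (q : M) ^ n) (hx1 : x ≠ 1) :
    ∃ q ∈ s, ∃ y ∈ Submonoid.closure s, x = q * y := by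
  obtain ⟨q, hq⟩ : f.support.Nonempty :=
    support_nonempty_iff.2 (by rintro rfl; exact hx1 (by simpa using hx))
  refine ⟨q, q.2, (q : M) ^ (f q - 1) * (f.erase q).prod fun q n => (q : M) ^ n, ?_, ?_⟩
  · exact mul_mem (pow_mem (Submonoid.subset_closure q.2) _)
      (SubmonoidClass.finsuppProd_mem _ _ _ fun c _ => pow_mem (Submonoid.subset_closure c.2) _)
  · rw [hx, ← mul_prod_erase f q _ hq, ← mul_assoc, ← pow_succ',
      Nat.sub_add_cancel (Nat.one_le_iff_ne_zero.2 (mem_support_iff.1 hq))]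

end Multiplicative

section Counting

variable {S : Type*} {deg : S → ℕ}

theorem cntIn_eq_ncard (P : Set S) (n : ℕ) : cntIn deg P n = ({x | deg x = n} ∩ P).ncard :=
  Nat.card_coe_set_eq _

theorem cntIn_add_cntIn_sdiff (hfib : ∀ n, {x : S | deg x = n}.Finite) {P Q : Set S}
    (hQP : Q ⊆ P) (n : ℕ) : cntIn deg Q n + cntIn deg (P \ Q) n = cntIn deg P n := by
  simp only [cntIn_eq_ncard]
  rw [← Set.ncard_inter_add_ncard_sdiff_eq_ncard _ Q ((hfib n).inter_of_left P),
    Set.inter_assoc, Set.inter_eq_right.2 hQP, Set.inter_sdiff_assoc]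

theorem cntIn_add_cntIn_compl (hfib : ∀ n, {x : S | deg x = n}.Finite) (P : Set S) (n : ℕ) :
    cntIn deg P n + cntIn deg Pᶜ n = cntAll deg n := by
  rw [Set.compl_eq_univ_sdiff, cntIn_add_cntIn_sdiff hfib (Set.subset_univ P), cntIn_eq_ncard,
    Set.inter_univ, cntAll, ← Nat.card_coe_set_eq]
  rfl

theorem natCard_le_sum_cntIn (hfib : ∀ n, {x : S | deg x = n}.Finite) {α : Type*} {g : α → S}
    (hg : Function.Injective g) {P : Set S} {K : ℕ} (hgK : ∀ a, deg (g a) < K ∧ g a ∈ P) :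
    Nat.card α ≤ ∑ m ∈ range K, cntIn deg P m := by
  have (m : Fin K) : Finite {x // deg x = m ∧ x ∈ P} :=
    ((hfib m).subset fun _ hx => hx.1).to_subtype
  rw [← Fin.sum_univ_eq_sum_range]
  unfold cntIn
  rw [← Nat.card_sigma]
  exact Nat.card_le_card_of_injective
    (fun a => ⟨⟨deg (g a), (hgK a).1⟩, g a, rfl, (hgK a).2⟩)
    fun a b h => hg (congrArg (fun s => (s.2 : S)) h)

variable [AddCommMonoid S] {Sp : Set S}

theorem cntIn_mul_cntIn_le_cntIn_compl (hind : LinearIndependent ℕ ((↑) : Sp → S))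
    (hdeg_add : ∀ x y : S, deg (x + y) = deg x + deg y)
    (hfib : ∀ n, {x : S | deg x = n}.Finite) {a b : ℕ} (hab : a ≠ b) :
    cntIn deg Sp a * cntIn deg Sp b ≤ cntIn deg Spᶜ (a + b) := by
  have : Finite {x // deg x = a + b ∧ x ∈ Spᶜ} :=
    ((hfib (a + b)).subset fun _ hx => hx.1).to_subtype
  rw [cntIn, cntIn, ← Nat.card_prod]
  refine Nat.card_le_card_of_injective
    (fun pp => ⟨pp.1 + pp.2, by rw [hdeg_add, pp.1.2.1, pp.2.2.1],
      fun h => hind.add_ne ⟨_, pp.1.2.2⟩ ⟨_, pp.2.2.2⟩ ⟨_, h⟩ rfl⟩) ?_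
  rintro ⟨⟨p, hpa, hp⟩, ⟨p', hpb, hp'⟩⟩ ⟨⟨r, hra, hr⟩, ⟨r', hrb, hr'⟩⟩ h
  obtain ⟨h1, h2⟩ | ⟨h1, -⟩ :=
    (hind.add_eq_add_iff (i := ⟨p, hp⟩) (j := ⟨p', hp'⟩) (k := ⟨r, hr⟩) (l := ⟨r', hr'⟩)).1
      (congrArg Subtype.val h)
  · simp only [Subtype.mk.injEq] at h1 h2
    subst h1 h2
    rfl
  · simp only [Subtype.mk.injEq] at h1
    exact absurd (hpa.symm.trans (h1 ▸ hrb)) hab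

end Counting

section Semiring

variable {S : Type*} [CommSemiring S] {Sp Sq : Set S} {deg : S → ℕ}

theorem cntIn_le_sum_cntIn_compl (hind : LinearIndependent ℕ ((↑) : Sp → S))
    (hdeg_add : ∀ x y : S, deg (x + y) = deg x + deg y)
    (hdeg_mul : ∀ x y : S, deg (x * y) = deg x * deg y)
    (hfib : ∀ n, {x : S | deg x = n}.Finite) {T : Set S} {n : ℕ}
    (hT : ∀ x ∈ T, deg x = n → ∃ q ∈ Sp, ∃ y ∈ Sp, x = q * y ∧ 2 ≤ deg q ∧ 2 ≤ deg y) :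
    cntIn deg T n ≤ ∑ m ∈ range (n / 2 + 3), cntIn deg Spᶜ m := by
  choose q hq y hy hxqy hq2 hy2 using fun x : {x // deg x = n ∧ x ∈ T} => hT x x.2.2 x.2.1
  refine natCard_le_sum_cntIn hfib (g := fun x => q x + y x) (fun x x' h => ?_)
    fun x => ⟨?_, ?_⟩
  · obtain ⟨h1, h2⟩ | ⟨h1, h2⟩ :=
      (hind.add_eq_add_iff (i := ⟨_, hq x⟩) (j := ⟨_, hy x⟩) (k := ⟨_, hq x'⟩)
        (l := ⟨_, hy x'⟩)).1 h
    all_goals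
      simp only [Subtype.mk.injEq] at h1 h2
      apply Subtype.ext
      rw [hxqy x, hxqy x', h1, h2]
    exact mul_comm _ _
  · have hn := x.2.1
    rw [hxqy x, hdeg_mul] at hn
    have : 2 * (deg (q x) + deg (y x)) ≤ deg (q x) * deg (y x) + 4 := by
      nlinarith [hq2 x, hy2 x]
    rw [hdeg_add]
    omega
  · exact fun h => hind.add_ne ⟨_, hq x⟩ ⟨_, hy x⟩ ⟨_, h⟩ rfl

theorem two_le_deg (hfiber0 : ∀ x : S, deg x = 0 ↔ x = 0)
    (hfiber1 : ∀ x ∈ Sp, deg x = 1 ↔ x = 1) {x : S} (hx : x ∈ Sp) (hx0 : x ≠ 0)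
    (hx1 : x ≠ 1) : 2 ≤ deg x := by
  have := mt (hfiber0 x).1 hx0
  have := mt (hfiber1 x hx).1 hx1
  omega

theorem exists_mul_of_mem_sdiff (hind : LinearIndependent ℕ ((↑) : Sp → S))
    (hdeg_one : deg 1 = 1) (hfiber0 : ∀ x : S, deg x = 0 ↔ x = 0) (hSqSp : Sq ⊆ Sp)
    (hone_mem : (1 : S) ∈ Sp) (hmul_mem : ∀ x ∈ Sp, ∀ y ∈ Sp, x * y ∈ Sp)
    (hmul_free : ∀ x ∈ Sp, ∃! f : Sq →₀ ℕ, x = f.prod fun q n => (q : S) ^ n)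
    (hfiber1 : ∀ x ∈ Sp, deg x = 1 ↔ x = 1) {x : S} (hx : x ∈ Sp \ Sq) (hdeg : 2 ≤ deg x) :
    ∃ q ∈ Sp, ∃ y ∈ Sp, x = q * y ∧ 2 ≤ deg q ∧ 2 ≤ deg y := by
  have hx1 : x ≠ 1 := by rintro rfl; omega
  obtain ⟨f, hf, -⟩ := hmul_free x hx.1
  obtain ⟨q, hq, y, hy, rfl⟩ := exists_mul_of_eq_finsuppProd hf hx1
  have hqSp := hSqSp hq
  have hySp : y ∈ Sp := Submonoid.closure_induction (fun _ h => hSqSp h) hone_mem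
    (fun a b _ _ ha hb => hmul_mem a ha b hb) hy
  have hq1 : q ≠ 1 := by
    rintro rfl
    exact one_notMem_of_existsUnique (hmul_free 1 hone_mem) hq
  have hy1 : y ≠ 1 := by
    rintro rfl
    exact hx.2 (by simpa using hq)
  exact ⟨q, hqSp, y, hySp, rfl,
    two_le_deg hfiber0 hfiber1 hqSp (hind.ne_zero ⟨q, hqSp⟩) hq1,
    two_le_deg hfiber0 hfiber1 hySp (hind.ne_zero ⟨y, hySp⟩) hy1⟩

end Semiring

section Growth

variable {P : ℕ → ℕ}

theorem mul_le_mul_add_of_add_le_shift {M d e : ℕ} (hd : 0 < d)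
    (h : ∀ m ≥ M, P m + e ≤ P (m + d)) (m : ℕ) : e * m ≤ d * P m + e * (M + d) := by
  induction m using Nat.strong_induction_on with
  | _ m ih =>
    by_cases hm : m < M + d
    · exact le_add_left (Nat.mul_le_mul_left e hm.le)
    · obtain ⟨k, rfl⟩ : ∃ k, m = k + d := ⟨m - d, by omega⟩
      have := Nat.mul_le_mul_left d (h k (by omega))
      have := ih k (by omega)
      nlinarith

variable {N : ℕ}

theorem two_mul_le_shift (hpos : ∀ n ≥ N, 0 < P n)
    (hmul : ∀ a ≥ N, ∀ b ≥ N, a ≠ b → 2 * (P a * P b) ≤ P (a + b)) {m : ℕ} (hm : N + 2 ≤ m) :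
    2 * P m ≤ P (m + (N + 1)) := by
  have := hmul m (by omega) (N + 1) (by omega) (by omega)
  have := hpos (N + 1) (by omega)
  nlinarith

theorem tendsto_atTop_of_two_mul_le (hpos : ∀ n ≥ N, 0 < P n)
    (hmul : ∀ a ≥ N, ∀ b ≥ N, a ≠ b → 2 * (P a * P b) ≤ P (a + b)) :
    Tendsto P atTop atTop := by
  have key := mul_le_mul_add_of_add_le_shift (P := P) (M := N + 2) (d := N + 1) (e := 1)
    (by omega) fun m hm => by
      have := two_mul_le_shift hpos hmul hm
      have := hpos m (by omega)
      omega
  refine tendsto_atTop_atTop.2 fun b => ⟨(N + 1) * b + (N + 2 + (N + 1)), fun m hm => ?_⟩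
  have := key m
  exact Nat.le_of_mul_le_mul_left (by omega : (N + 1) * b ≤ (N + 1) * P m) (by omega)

theorem exists_le_add_of_two_mul_le (hpos : ∀ n ≥ N, 0 < P n)
    (hmul : ∀ a ≥ N, ∀ b ≥ N, a ≠ b → 2 * (P a * P b) ≤ P (a + b)) :
    ∃ C, ∀ m, m ≤ P m + C := by
  obtain ⟨M, hM⟩ := eventually_atTop.1
    ((tendsto_atTop_of_two_mul_le hpos hmul).eventually_ge_atTop (N + 1))
  refine ⟨M + N + 2 + (N + 1), fun m => ?_⟩
  have := mul_le_mul_add_of_add_le_shift (P := P) (M := M + N + 2) (d := N + 1) (e := N + 1)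
    (by omega) (fun k hk => by
      have := two_mul_le_shift hpos hmul (m := k) (by omega)
      have := hM k (by omega)
      omega) m
  rw [← mul_add] at this
  exact Nat.le_of_mul_le_mul_left this (by omega)

theorem eventually_mul_le_of_two_mul_le (hpos : ∀ n ≥ N, 0 < P n)
    (hmul : ∀ a ≥ N, ∀ b ≥ N, a ≠ b → 2 * (P a * P b) ≤ P (a + b)) :
    ∀ᶠ n in atTop, (n / 2 + 3) * P (n / 2 + 2) ≤ P n := by
  obtain ⟨C, hC⟩ := exists_le_add_of_two_mul_le hpos hmul
  filter_upwards [eventually_ge_atTop (4 * (N + C + 4))] with n hn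
  have hV := hC (n - (n / 2 + 2))
  calc (n / 2 + 3) * P (n / 2 + 2) ≤ 2 * P (n - (n / 2 + 2)) * P (n / 2 + 2) :=
        Nat.mul_le_mul_right _ (by omega)
    _ = 2 * (P (n / 2 + 2) * P (n - (n / 2 + 2))) := by ring
    _ ≤ P (n / 2 + 2 + (n - (n / 2 + 2))) := hmul _ (by omega) _ (by omega) (by omega)
    _ = P n := by congr 1; omega

theorem eventually_sum_range_le (hmono : ∀ n ≥ N, P n ≤ P (n + 1)) (hpos : ∀ n ≥ N, 0 < P n)
    (hmul : ∀ a ≥ N, ∀ b ≥ N, a ≠ b → 2 * (P a * P b) ≤ P (a + b)) :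
    ∀ᶠ n in atTop, ∑ m ∈ range (n / 2 + 3), P m ≤ 2 * P n := by
  filter_upwards [eventually_mul_le_of_two_mul_le hpos hmul,
    (tendsto_atTop_of_two_mul_le hpos hmul).eventually_ge_atTop (∑ m ∈ range N, P m),
    eventually_ge_atTop (2 * N)] with n hlin hconst hn
  have htail : ∑ m ∈ Ico N (n / 2 + 3), P m ≤ (n / 2 + 3) * P (n / 2 + 2) :=
    calc ∑ m ∈ Ico N (n / 2 + 3), P m ≤ ∑ _m ∈ Ico N (n / 2 + 3), P (n / 2 + 2) :=
          sum_le_sum fun m hm => monotoneOn_nat_Ici_of_le_succ hmono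
            (mem_Ico.1 hm).1 (show N ≤ n / 2 + 2 by omega)
            (Nat.le_of_lt_succ (mem_Ico.1 hm).2)
      _ ≤ (n / 2 + 3) * P (n / 2 + 2) := by
          rw [sum_const, Nat.card_Ico, smul_eq_mul]
          exact Nat.mul_le_mul_right _ (Nat.sub_le _ _)
  rw [← sum_range_add_sum_Ico _ (show N ≤ n / 2 + 3 by omega)]
  omega

theorem isLittleO_sum_range_half {R : ℕ → ℕ}
    (hR : (fun n => (R n : ℝ)) =o[atTop] fun n => (P n : ℝ))
    (hmono : ∀ᶠ n in atTop, P n ≤ P (n + 1)) (hpos : ∀ᶠ n in atTop, 0 < P n)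
    (hpair : ∀ a b, a ≠ b → P a * P b ≤ R (a + b)) :
    (fun n => ∑ m ∈ range (n / 2 + 3), (R m : ℝ)) =o[atTop] fun n => (P n : ℝ) := by
  have hhalf : ∀ᶠ n in atTop, 2 * R n ≤ P n := by
    filter_upwards [hR.bound (by norm_num : (0 : ℝ) < 1 / 2)] with n hn
    simp only [Real.norm_natCast] at hn
    exact_mod_cast (by linarith : (2 * R n : ℝ) ≤ P n)
  obtain ⟨N, hN⟩ := eventually_atTop.1 (hmono.and (hpos.and hhalf))
  have hpos' : ∀ n ≥ N, 0 < P n := fun n hn => (hN n hn).2.1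
  have hmul : ∀ a ≥ N, ∀ b ≥ N, a ≠ b → 2 * (P a * P b) ≤ P (a + b) := fun a ha b hb hab =>
    (Nat.mul_le_mul_left 2 (hpair a b hab)).trans (hN (a + b) (by omega)).2.2
  have hsum : Tendsto (fun n => ∑ m ∈ range n, (P m : ℝ)) atTop atTop :=
    (tendsto_add_atTop_iff_nat 1).1 <| tendsto_atTop_mono
      (fun n => single_le_sum (fun m _ => Nat.cast_nonneg (P m)) (self_mem_range_succ n))
      (tendsto_natCast_atTop_atTop.comp (tendsto_atTop_of_two_mul_le hpos' hmul))
  have hhalf_tendsto : Tendsto (fun n : ℕ => n / 2 + 3) atTop atTop :=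
    tendsto_atTop_atTop.2 fun b => ⟨2 * b, fun n hn => by omega⟩
  refine ((hR.sum_range (fun _ => Nat.cast_nonneg _) hsum).comp_tendsto
    hhalf_tendsto).trans_isBigO (IsBigO.of_bound 2 ?_)
  filter_upwards [eventually_sum_range_le (fun n hn => (hN n hn).1) hpos' hmul] with n hn
  simp only [Function.comp_apply, Real.norm_natCast, ← Nat.cast_sum]
  exact_mod_cast hn

end Growth

theorem stmt_9_general {S : Type*} [CommSemiring S]
    (Sp Sq : Set S) (deg : S → ℕ)
    (hdeg_one : deg 1 = 1)
    (hdeg_add : ∀ x y : S, deg (x + y) = deg x + deg y)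
    (hdeg_mul : ∀ x y : S, deg (x * y) = deg x * deg y)
    (hfiber0 : ∀ x : S, deg x = 0 ↔ x = 0)
    (hfib : ∀ n : ℕ, {x : S | deg x = n}.Finite)
    (hadd_free : ∀ x : S, ∃! f : Sp →₀ ℕ, x = f.sum fun p n => n • (p : S))
    (hSqSp : Sq ⊆ Sp)
    (hone_mem : (1 : S) ∈ Sp)
    (hmul_mem : ∀ x ∈ Sp, ∀ y ∈ Sp, x * y ∈ Sp)
    (hmul_free : ∀ x ∈ Sp, ∃! f : Sq →₀ ℕ, x = f.prod fun q n => (q : S) ^ n)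
    (hfiber1 : ∀ x ∈ Sp, (deg x = 1 ↔ x = 1))
    (hmono : ∃ N : ℕ, ∀ n ≥ N, cntIn deg Sp n ≤ cntIn deg Sp (n + 1))
    (hG1 : (fun n : ℕ => (cntAll deg n : ℝ) - cntIn deg Sp n)
      =o[Filter.atTop] fun n : ℕ => (cntIn deg Sp n : ℝ))
    (hpos : ∀ᶠ n : ℕ in Filter.atTop, 0 < cntIn deg Sp n) :
    (fun n : ℕ => (cntIn deg Sp n : ℝ) - cntIn deg Sq n)
      =o[Filter.atTop] fun n : ℕ => (cntIn deg Sp n : ℝ) := by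
  have hind := linearIndependent_of_existsUnique hadd_free
  have hcompl : (fun n => (cntIn deg Spᶜ n : ℝ)) =o[atTop] fun n => (cntIn deg Sp n : ℝ) :=
    hG1.congr_left fun n => by
      rw [← cntIn_add_cntIn_compl hfib Sp n]
      push_cast
      ring
  refine (IsBigO.of_bound 1 ?_).trans_isLittleO <| isLittleO_sum_range_half hcompl
    (eventually_atTop.2 hmono) hpos fun a b hab =>
      cntIn_mul_cntIn_le_cntIn_compl hind hdeg_add hfib hab
  filter_upwards [eventually_ge_atTop 2] with n hn
  rw [← cntIn_add_cntIn_sdiff hfib hSqSp n, Nat.cast_add, add_sub_cancel_left, one_mul,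
    Real.norm_natCast, ← Nat.cast_sum, Real.norm_natCast, Nat.cast_le]
  exact cntIn_le_sum_cntIn_compl hind hdeg_add hdeg_mul hfib fun x hx hxn =>
    exists_mul_of_mem_sdiff hind hdeg_one hfiber0 hSqSp hone_mem hmul_mem hmul_free hfiber1 hx
      (hxn ▸ hn)

/-- In an arithmetical semiring `(S, +, □, ∂)` (additive monoid free on the additive primes `Sp`,
multiplicative monoid of additive primes free on the multiplicative primes `Sq`, degree a
semiring homomorphism to `ℕ` with finite fibers, `∂⁻¹(0) = {0}` and `∂⁻¹(1) ∩ Sp = {1}`),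
assumed monotonic and
satisfying axiom `G₁⁺` (`S(n) − S⁺(n) = o(S⁺(n))`) with `S⁺(n) > 0` for large `n`:
axiom `G₁□` holds, i.e. `S⁺(n) − S□(n) = o(S⁺(n))`. -/
theorem stmt_9 {S : Type*} [CommSemiring S]
    (Sp Sq : Set S) (deg : S → ℕ)
    (hdeg_zero : deg 0 = 0) (hdeg_one : deg 1 = 1)
    (hdeg_add : ∀ x y : S, deg (x + y) = deg x + deg y)
    (hdeg_mul : ∀ x y : S, deg (x * y) = deg x * deg y)
    (hfiber0 : ∀ x : S, deg x = 0 ↔ x = 0)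
    (hfib : ∀ n : ℕ, {x : S | deg x = n}.Finite)
    (hadd_free : ∀ x : S, ∃! f : Sp →₀ ℕ, x = f.sum fun p n => n • (p : S))
    (hSqSp : Sq ⊆ Sp)
    (hone_mem : (1 : S) ∈ Sp)
    (hmul_mem : ∀ x ∈ Sp, ∀ y ∈ Sp, x * y ∈ Sp)
    (hmul_free : ∀ x ∈ Sp, ∃! f : Sq →₀ ℕ, x = f.prod fun q n => (q : S) ^ n)
    (hfiber1 : ∀ x ∈ Sp, (deg x = 1 ↔ x = 1))
    (hmono : ∃ N : ℕ, ∀ n ≥ N, cntIn deg Sp n ≤ cntIn deg Sp (n + 1))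
    (hG1 : (fun n : ℕ => (cntAll deg n : ℝ) - cntIn deg Sp n)
      =o[Filter.atTop] fun n : ℕ => (cntIn deg Sp n : ℝ))
    (hpos : ∀ᶠ n : ℕ in Filter.atTop, 0 < cntIn deg Sp n) :
    (fun n : ℕ => (cntIn deg Sp n : ℝ) - cntIn deg Sq n)
      =o[Filter.atTop] fun n : ℕ => (cntIn deg Sp n : ℝ) :=
  stmt_9_general Sp Sq deg hdeg_one hdeg_add hdeg_mul hfiber0 hfib hadd_free hSqSp hone_mem hmul_mem
    hmul_free hfiber1 hmono hG1 hpos
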